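/- arXiv:0901.1761 — 5 statements merged into one kernel-verified Lean document; each statement's English description precedes it below -/
import Mathlib

section
/- Let a : Fin n → ℝ be injective, let x ∈ ℝ, and set low := {i : a i ≤ x} and high := {i : x < a i}. Fix indices L ≤ R < n, let W := {i : L ≤ i ≤ R}, and let m := |low ∩ W|. Then for every p with 1 ≤ p ≤ |W|: if p ≤ m, the p-th smallest element of the image a(W) equals the p-th smallest element of a(low ∩ W); and if p > m, the p-th smallest element of a(W) equals the (p − m)-th smallest element of a(high ∩ W). -/
open Finset

theorem Finset.sort_union_of_forall_lt {α : Type*} [LinearOrder α] {s t : Finset α}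
    (h : ∀ a ∈ s, ∀ b ∈ t, a < b) :
    (s ∪ t).sort (· ≤ ·) = s.sort (· ≤ ·) ++ t.sort (· ≤ ·) := by
  have hdisj : ∀ a ∈ s.sort (· ≤ ·), ∀ b ∈ t.sort (· ≤ ·), a ≠ b := fun a ha b hb =>
    (h a ((mem_sort _).1 ha) b ((mem_sort _).1 hb)).ne
  have hnodup : (s.sort (· ≤ ·) ++ t.sort (· ≤ ·)).Nodup :=
    List.nodup_append.2 ⟨sort_nodup _ _, sort_nodup _ _, hdisj⟩
  have hsorted : (s.sort (· ≤ ·) ++ t.sort (· ≤ ·)).Pairwise (· ≤ ·) :=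
    List.pairwise_append.2 ⟨pairwise_sort _ _, pairwise_sort _ _, fun a ha b hb =>
      (h a ((mem_sort _).1 ha) b ((mem_sort _).1 hb)).le⟩
  have key := (List.toFinset_sort (· ≤ ·) hnodup).2 hsorted
  rwa [List.toFinset_append, sort_toFinset, sort_toFinset] at key

theorem Finset.sort_eq_sort_filter_le_append_sort_filter_lt {α : Type*} [LinearOrder α]
    (s : Finset α) (x : α) :
    s.sort (· ≤ ·) = (s.filter (· ≤ x)).sort (· ≤ ·) ++ (s.filter (x < ·)).sort (· ≤ ·) := by
  rw [← sort_union_of_forall_lt fun a ha b hb =>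
    ((mem_filter.1 ha).2.trans_lt (mem_filter.1 hb).2)]
  congr 1
  ext a
  simp only [mem_union, mem_filter]
  rcases le_or_gt a x with hax | hax <;> tauto

theorem range_median_key_observation_general {n : ℕ} (a : Fin n → ℝ)
    (ha : Function.Injective a) (x : ℝ) (L R : Fin n)
    (p : ℕ) (hp1 : 1 ≤ p) :
    let low : Finset (Fin n) := Finset.univ.filter (fun i => a i ≤ x)
    let high : Finset (Fin n) := Finset.univ.filter (fun i => x < a i)
    let W : Finset (Fin n) := Finset.Icc L R
    let m : ℕ := (low ∩ W).card
    (p ≤ m →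
      ((W.image a).sort (· ≤ ·))[p - 1]? =
        (((low ∩ W).image a).sort (· ≤ ·))[p - 1]?) ∧
    (m < p →
      ((W.image a).sort (· ≤ ·))[p - 1]? =
        (((high ∩ W).image a).sort (· ≤ ·))[p - m - 1]?) := by
  intro low high W m
  have hfilter (q : ℝ → Prop) [DecidablePred q] :
      (W.image a).filter q = ((univ.filter (q ∘ a)) ∩ W).image a := by
    rw [filter_image, filter_inter, univ_inter]
    rfl
  have hsplit : (W.image a).sort (· ≤ ·) =
      ((low ∩ W).image a).sort (· ≤ ·) ++ ((high ∩ W).image a).sort (· ≤ ·) := by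
    rw [sort_eq_sort_filter_le_append_sort_filter_lt (W.image a) x, hfilter, hfilter]
    rfl
  have hlen : (((low ∩ W).image a).sort (· ≤ ·)).length = m := by
    rw [length_sort, card_image_of_injective _ ha]
  refine ⟨fun hpm => ?_, fun hmp => ?_⟩
  · rw [hsplit, List.getElem?_append_left (by rw [hlen]; omega)]
  · rw [hsplit, List.getElem?_append_right (by rw [hlen]; omega), hlen, Nat.sub_right_comm]

/-- The key observation behind the range-median algorithm: a rank query on the
values of a window `W = [L, R]` of an (injective) array `a : Fin n → ℝ` reduces,
after counting the number `m` of low-valued elements (value `≤ x`) with index in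
the window, to a rank query on the low part (if `p ≤ m`) or on the high part
with rank `p - m` (if `p > m`). The `p`-th smallest element of a finite set of
reals is the element at 1-indexed position `p` of its increasing enumeration. -/
theorem range_median_key_observation {n : ℕ} (a : Fin n → ℝ)
    (ha : Function.Injective a) (x : ℝ) (L R : Fin n) (hLR : L ≤ R)
    (p : ℕ) (hp1 : 1 ≤ p) (hp2 : p ≤ (Finset.Icc L R).card) :
    let low : Finset (Fin n) := Finset.univ.filter (fun i => a i ≤ x)
    let high : Finset (Fin n) := Finset.univ.filter (fun i => x < a i)
    let W : Finset (Fin n) := Finset.Icc L R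
    let m : ℕ := (low ∩ W).card
    (p ≤ m →
      ((W.image a).sort (· ≤ ·))[p - 1]? =
        (((low ∩ W).image a).sort (· ≤ ·))[p - 1]?) ∧
    (m < p →
      ((W.image a).sort (· ≤ ·))[p - 1]? =
        (((high ∩ W).image a).sort (· ≤ ·))[p - m - 1]?) :=
  range_median_key_observation_general a ha x L R p hp1
end

section
/- Let A be a list over a type α, let P be a decidable predicate on α, and let l ≤ r ≤ length(A) be natural numbers. Define cnt(t) to be the number of elements satisfying P among the first t elements of A. Then taking the filtered list A.filter P, dropping its first cnt(l) elements and keeping the next cnt(r) − cnt(l) elements yields exactly the list obtained by filtering P on the contiguous segment of A consisting of positions l, l+1, …, r−1 (i.e., ((A.drop l).take (r − l)).filter P). -/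
/-!
Splitting `A` at position `t` splits `A.filter P` at position `cnt t`, because filtering commutes
with concatenation. Hence dropping `cnt l` elements of `A.filter P` leaves the filter of `A.drop l`,
and `cnt r - cnt l` is the number of `P`-elements among positions `l, …, r-1`, i.e. exactly the
length of the filtered segment, which is a prefix of the filter of `A.drop l`.
-/

namespace List

variable {α : Type*} (p : α → Bool) (L : List α)

theorem filter_take_append_filter_drop (n : ℕ) :
    (L.take n).filter p ++ (L.drop n).filter p = L.filter p := by
  rw [← filter_append, take_append_drop]

theorem drop_length_filter_take_filter (n : ℕ) :
    (L.filter p).drop ((L.take n).filter p).length = (L.drop n).filter p := by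
  rw [← filter_take_append_filter_drop p L n, drop_left]

theorem take_length_filter_take_filter (n : ℕ) :
    (L.filter p).take ((L.take n).filter p).length = (L.take n).filter p := by
  rw [← filter_take_append_filter_drop p L n, take_left]

theorem length_filter_take_add (n m : ℕ) :
    ((L.take (n + m)).filter p).length =
      ((L.take n).filter p).length + (((L.drop n).take m).filter p).length := by
  rw [take_add, filter_append, length_append]

end List

theorem filter_segment_contraction_general {α : Type*} (A : List α)
    (P : α → Prop) [DecidablePred P] (l r : ℕ) (hlr : l ≤ r) :
    (((A.filter (fun a => decide (P a))).drop
          ((A.take l).filter (fun a => decide (P a))).length).take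
        (((A.take r).filter (fun a => decide (P a))).length -
          ((A.take l).filter (fun a => decide (P a))).length)) =
      ((A.drop l).take (r - l)).filter (fun a => decide (P a)) := by
  obtain ⟨m, rfl⟩ := Nat.exists_eq_add_of_le hlr
  rw [List.length_filter_take_add, Nat.add_sub_cancel_left, Nat.add_sub_cancel_left,
    List.drop_length_filter_take_filter, List.take_length_filter_take_filter]

/-- Array-contraction correctness underlying the linear-space RAM algorithm:
letting `cnt t` be the number of elements satisfying `P` among the first `t`
elements of `A`, dropping the first `cnt l` elements of the filtered list
`A.filter P` and keeping the next `cnt r − cnt l` ones yields exactly the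
result of filtering `P` on the contiguous segment of positions `l, …, r−1`. -/
theorem filter_segment_contraction {α : Type*} (A : List α)
    (P : α → Prop) [DecidablePred P] (l r : ℕ) (hlr : l ≤ r) (hr : r ≤ A.length) :
    (((A.filter (fun a => decide (P a))).drop
          ((A.take l).filter (fun a => decide (P a))).length).take
        (((A.take r).filter (fun a => decide (P a))).length -
          ((A.take l).filter (fun a => decide (P a))).length)) =
      ((A.drop l).take (r - l)).filter (fun a => decide (P a)) :=
  filter_segment_contraction_general A P l r hlr
end

section
/- Let A be a list of pairwise distinct real numbers of length n, let x ∈ ℝ, and let 1 ≤ L ≤ R ≤ n and 1 ≤ p ≤ R − L + 1. Let Alow := A.filter (· ≤ x) and Ahigh := A.filter (· > x). Let l be the number of elements ≤ x among the first L − 1 elements of A, let r be the number of elements ≤ x among the first R elements of A, and let m := r − l. Then: if p ≤ m, the p-th smallest element of the segment A[L..R] (positions L through R of A, 1-indexed) equals the p-th smallest element of the segment Alow[l+1..r]; and if p > m, it equals the (p − m)-th smallest element of the segment Ahigh[(L−l)..(R−r)]. -/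
/-!
Splitting at the pivot `x` commutes with taking the segment: the elements `≤ x` of `A[L..R]` form
exactly the positions `l + 1, …, r` of the low part, and the elements `> x` the positions
`L - l, …, R - r` of the high part. Sorting a list puts all its elements `≤ x` before all its
elements `> x`, so the `p`-th smallest element of `A[L..R]` is the `p`-th smallest of its low part
when `p ≤ m`, and the `(p - m)`-th smallest of its high part otherwise.
-/

/-- The segment of a list consisting of the 1-indexed positions `i` through `j`. -/
def listSeg (A : List ℝ) (i j : ℕ) : List ℝ :=
  (A.drop (i - 1)).take (j - i + 1)

/-- The `p`-th smallest element (1-indexed rank `p`) of a list of reals: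
position `p` of its non-decreasing sorted enumeration. -/
noncomputable def kthSmallest (A : List ℝ) (p : ℕ) : Option ℝ :=
  (A.insertionSort (· ≤ ·))[p - 1]?

namespace List

variable {α : Type*} [LinearOrder α]

theorem filter_gt_eq_filter_not_le (S : List α) (x : α) :
    S.filter (fun e => e > x) = S.filter (fun e => !decide (e ≤ x)) :=
  filter_congr fun e _ => by simp [← decide_not, not_le]

theorem length_filter_le_add_length_filter_gt (S : List α) (x : α) :
    (S.filter (fun e => e ≤ x)).length + (S.filter (fun e => e > x)).length = S.length := by
  rw [filter_gt_eq_filter_not_le]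
  exact (length_eq_length_filter_add _).symm

theorem insertionSort_eq_filter_le_append_filter_gt (S : List α) (x : α) :
    S.insertionSort (· ≤ ·) =
      (S.filter (fun e => e ≤ x)).insertionSort (· ≤ ·) ++
        (S.filter (fun e => e > x)).insertionSort (· ≤ ·) := by
  refine Perm.eq_of_sortedLE sortedLE_insertionSort ?_ ?_
  · rw [sortedLE_iff_pairwise, pairwise_append]
    refine ⟨pairwise_insertionSort _ _, pairwise_insertionSort _ _, fun a ha b hb => ?_⟩
    have hax : a ≤ x := by simpa using (mem_filter.1 ((perm_insertionSort _ _).mem_iff.1 ha)).2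
    have hxb : x < b := by simpa using (mem_filter.1 ((perm_insertionSort _ _).mem_iff.1 hb)).2
    exact hax.trans hxb.le
  · calc S.insertionSort (· ≤ ·) ~ S := perm_insertionSort _ _
      _ ~ S.filter (fun e => e ≤ x) ++ S.filter (fun e => e > x) := by
        rw [filter_gt_eq_filter_not_le]; exact (filter_append_perm _ S).symm
      _ ~ _ := (perm_insertionSort _ _).symm.append (perm_insertionSort _ _).symm

end List

open List

theorem kthSmallest_eq_kthSmallest_filter_le {S : List ℝ} {x : ℝ} {p : ℕ} (hp : 1 ≤ p)
    (hpm : p ≤ (S.filter (fun e => e ≤ x)).length) :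
    kthSmallest S p = kthSmallest (S.filter (fun e => e ≤ x)) p := by
  rw [kthSmallest, insertionSort_eq_filter_le_append_filter_gt S x, getElem?_append_left]
  · rfl
  · rw [length_insertionSort]; omega

theorem kthSmallest_eq_kthSmallest_filter_gt {S : List ℝ} {x : ℝ} {p : ℕ}
    (hmp : (S.filter (fun e => e ≤ x)).length < p) :
    kthSmallest S p =
      kthSmallest (S.filter (fun e => e > x)) (p - (S.filter (fun e => e ≤ x)).length) := by
  rw [kthSmallest, insertionSort_eq_filter_le_append_filter_gt S x, getElem?_append_right,
    length_insertionSort, kthSmallest]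
  · congr 1; omega
  · rw [length_insertionSort]; omega

-- `listSeg A i j` is never empty when `i ≤ A.length`, even for `j < i`: empty segments are not expressible.
theorem listSeg_append_append {u v w : List ℝ} (hv : v ≠ []) :
    listSeg (u ++ v ++ w) (u.length + 1) (u.length + v.length) = v := by
  have hlen : u.length + v.length - (u.length + 1) + 1 = v.length := by
    have := length_pos_iff.2 hv; omega
  rw [listSeg, Nat.add_sub_cancel, hlen, append_assoc, drop_left, take_left]

theorem take_append_listSeg {A : List ℝ} {L R : ℕ} (hL : 1 ≤ L) (hLR : L ≤ R) :
    A.take (L - 1) ++ listSeg A L R = A.take R := by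
  rw [listSeg, ← take_add, show L - 1 + (R - L + 1) = R by omega]

theorem length_listSeg {A : List ℝ} {L R : ℕ} (hL : 1 ≤ L) (hLR : L ≤ R) (hR : R ≤ A.length) :
    (listSeg A L R).length = R - L + 1 := by
  rw [listSeg, length_take, length_drop]
  omega

theorem listSeg_filter_eq_filter_listSeg {A : List ℝ} {L R : ℕ} (hL : 1 ≤ L) (hLR : L ≤ R)
    (q : ℝ → Bool) (hne : (listSeg A L R).filter q ≠ []) :
    listSeg (A.filter q) (((A.take (L - 1)).filter q).length + 1)
        (((A.take (L - 1)).filter q).length + ((listSeg A L R).filter q).length) =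
      (listSeg A L R).filter q := by
  have hA : A = A.take (L - 1) ++ listSeg A L R ++ A.drop R := by
    rw [take_append_listSeg hL hLR, take_append_drop]
  have hfilter := congrArg (filter q) hA
  rw [filter_append, filter_append] at hfilter
  rw [hfilter]
  exact listSeg_append_append hne

theorem range_select_step_contracted_general (A : List ℝ) (n : ℕ) (hn : A.length = n)
    (x : ℝ) (L R p : ℕ)
    (hL : 1 ≤ L) (hLR : L ≤ R) (hR : R ≤ n) (hp1 : 1 ≤ p) (hp2 : p ≤ R - L + 1) :
    let Alow := A.filter (fun e => e ≤ x)
    let Ahigh := A.filter (fun e => e > x)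
    let l := ((A.take (L - 1)).filter (fun e => e ≤ x)).length
    let r := ((A.take R).filter (fun e => e ≤ x)).length
    let m := r - l
    (p ≤ m →
      kthSmallest (listSeg A L R) p = kthSmallest (listSeg Alow (l + 1) r) p) ∧
    (m < p →
      kthSmallest (listSeg A L R) p =
        kthSmallest (listSeg Ahigh (L - l) (R - r)) (p - m)) := by
  intro Alow Ahigh l r m
  set S := listSeg A L R
  set mlow := (S.filter (fun e => e ≤ x)).length
  set mhigh := (S.filter (fun e => e > x)).length
  set lhigh := ((A.take (L - 1)).filter (fun e => e > x)).length
  have hr : r = l + mlow := by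
    simp only [r, ← take_append_listSeg hL hLR, filter_append, length_append]; rfl
  have hS : mlow + mhigh = R - L + 1 := by
    rw [length_filter_le_add_length_filter_gt, length_listSeg hL hLR (hn ▸ hR)]
  have hprefix : l + lhigh = L - 1 := by
    rw [length_filter_le_add_length_filter_gt, length_take]; omega
  refine ⟨fun hpm => ?_, fun hmp => ?_⟩
  · rw [kthSmallest_eq_kthSmallest_filter_le (x := x) hp1 (by omega), hr,
      listSeg_filter_eq_filter_listSeg hL hLR (fun e => e ≤ x)
        (ne_nil_of_length_pos (show 0 < mlow by omega))]
  · rw [kthSmallest_eq_kthSmallest_filter_gt (x := x) (by omega),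
      show L - l = lhigh + 1 by omega, show R - r = lhigh + mhigh by omega,
      listSeg_filter_eq_filter_listSeg hL hLR (fun e => e > x)
        (ne_nil_of_length_pos (show 0 < mhigh by omega))]
    congr 1; omega

/-- The single-step invariant of Algorithm 2 of the paper: for a list `A` of
pairwise distinct reals, a rank-`p` query on the 1-indexed segment `A[L..R]`
reduces, after computing the prefix counts `l` and `r` of elements `≤ x` among
the first `L − 1` resp. `R` elements, to a rank query on a contracted segment
of the low part `A.filter (· ≤ x)` (rank `p`, if `p ≤ m := r − l`) or of the
high part `A.filter (· > x)` (rank `p − m`, otherwise). -/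
theorem range_select_step_contracted (A : List ℝ) (n : ℕ) (hn : A.length = n)
    (hdist : A.Pairwise (· ≠ ·)) (x : ℝ) (L R p : ℕ)
    (hL : 1 ≤ L) (hLR : L ≤ R) (hR : R ≤ n) (hp1 : 1 ≤ p) (hp2 : p ≤ R - L + 1) :
    let Alow := A.filter (fun e => e ≤ x)
    let Ahigh := A.filter (fun e => e > x)
    let l := ((A.take (L - 1)).filter (fun e => e ≤ x)).length
    let r := ((A.take R).filter (fun e => e ≤ x)).length
    let m := r - l
    (p ≤ m →
      kthSmallest (listSeg A L R) p = kthSmallest (listSeg Alow (l + 1) r) p) ∧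
    (m < p →
      kthSmallest (listSeg A L R) p =
        kthSmallest (listSeg Ahigh (L - l) (R - r)) (p - m)) :=
  range_select_step_contracted_general A n hn x L R p hL hLR hR hp1 hp2
end

section
/- Let k ≥ 1 and let s : Fin k → ℕ be a function such that for every j ∈ ℕ, the number of indices i with s(i) = j is at most 2^j. Then ∑_{i} (1/2)^{s(i)} ≤ log₂ k + 2. -/
/-!
Split the queries at level `L = ⌊log₂ k⌋ + 1`. Each level `j < L` holds at most `2^j` queries,
each contributing `2^{-j}`, so the levels below `L` contribute at most `L`. The remaining queries,
at most `k < 2^L` of them, contribute at most `2^{-L}` each, hence less than `1` in total.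
-/

open Finset

section

variable {ι : Type*} [Fintype ι] (s : ι → ℕ)

theorem sum_half_pow_filter_lt_le (L : ℕ)
    (h : ∀ j : ℕ, (univ.filter (fun i => s i = j)).card ≤ 2 ^ j) :
    ∑ i with s i < L, ((1 : ℝ) / 2) ^ s i ≤ L := by
  have hfiber := sum_fiberwise_eq_sum_filter' univ (range L) s (fun j => ((1 : ℝ) / 2) ^ j)
  simp only [mem_range] at hfiber
  rw [← hfiber]
  calc ∑ j ∈ range L, ∑ i with s i = j, ((1 : ℝ) / 2) ^ j
      ≤ ∑ j ∈ range L, (2 : ℝ) ^ j * (1 / 2) ^ j := by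
        gcongr with j
        rw [sum_const, nsmul_eq_mul]
        gcongr
        exact_mod_cast h j
    _ = L := by simp

theorem sum_half_pow_filter_not_lt_le (L : ℕ) :
    ∑ i with ¬s i < L, ((1 : ℝ) / 2) ^ s i ≤ Fintype.card ι * (1 / 2) ^ L := by
  calc ∑ i with ¬s i < L, ((1 : ℝ) / 2) ^ s i
      ≤ ∑ i with ¬s i < L, ((1 : ℝ) / 2) ^ L := by
        refine sum_le_sum fun i hi => pow_le_pow_of_le_one (by norm_num) (by norm_num) ?_
        exact not_lt.mp (mem_filter.mp hi).2
    _ ≤ Fintype.card ι * (1 / 2) ^ L := by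
        rw [sum_const, nsmul_eq_mul]
        gcongr
        exact_mod_cast card_filter_le _ _

theorem sum_half_pow_le_of_card_fiber_le (L : ℕ)
    (h : ∀ j : ℕ, (univ.filter (fun i => s i = j)).card ≤ 2 ^ j) :
    ∑ i, ((1 : ℝ) / 2) ^ s i ≤ L + Fintype.card ι * (1 / 2) ^ L := by
  rw [← sum_filter_add_sum_filter_not univ (fun i => s i < L)]
  exact add_le_add (sum_half_pow_filter_lt_le s L h) (sum_half_pow_filter_not_lt_le s L)

end

theorem lazy_preprocessing_work_bound_general (k : ℕ) (s : Fin k → ℕ)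
    (h : ∀ j : ℕ, (Finset.univ.filter (fun i => s i = j)).card ≤ 2 ^ j) :
    ∑ i : Fin k, ((1 : ℝ) / 2) ^ (s i) ≤ Real.logb 2 k + 2 := by
  set L := Nat.log 2 k
  have hk : (k : ℝ) < 2 ^ (L + 1) := mod_cast Nat.lt_pow_succ_log_self one_lt_two k
  have htail : (k : ℝ) * (1 / 2) ^ (L + 1) ≤ 1 := by
    rw [div_pow, one_pow, mul_one_div, div_le_one (by positivity)]
    exact hk.le
  have hL : (L : ℝ) ≤ Real.logb 2 k := Real.natLog_le_logb k 2
  calc ∑ i, ((1 : ℝ) / 2) ^ s i ≤ (L + 1 : ℕ) + k * (1 / 2) ^ (L + 1) := by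
        simpa using sum_half_pow_le_of_card_fiber_le s (L + 1) h
    _ ≤ Real.logb 2 k + 2 := by
        push_cast
        linarith

/-- Analysis of the lazy preprocessing of the range-median algorithm: if the
recursion level `s i` of query `i` satisfies that each level `j` occurs at most
`2^j` times among the `k` queries, then the total (normalized) preprocessing
work `∑ i, 2^{−s i}` is at most `log₂ k + 2`. -/
theorem lazy_preprocessing_work_bound (k : ℕ) (hk : 1 ≤ k) (s : Fin k → ℕ)
    (h : ∀ j : ℕ, (Finset.univ.filter (fun i => s i = j)).card ≤ 2 ^ j) :
    ∑ i : Fin k, ((1 : ℝ) / 2) ^ (s i) ≤ Real.logb 2 k + 2 :=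
  lazy_preprocessing_work_bound_general k s h
end

section
/- There exist a constant c > 0 and a natural number N such that for all natural numbers n and k with n ≥ N, 2 ≤ k, 2k ≤ n, and k dividing n, one has log( n! / ( k! · ((n/k − 1)!)^k ) ) ≥ c · n · log k. -/
/-! Write `n = (j + 1) k` with `j ≥ 1`. Comparing `(mk + k)! / (mk)! = (mk + 1) ⋯ (mk + k)` factor by
factor with `k! (m + 1)^k` gives `(k!)^m (m!)^k ≤ (mk)!` by induction on `m`, so the count is at
least `(k!)^j`. Pairing the factors `i + 1` and `k - i` of `(k!)^2` gives `k^k ≤ (k!)^2`, i.e.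
`log k! ≥ (k log k) / 2`, and `j ≥ (j + 1) / 2` turns `j log k!` into `(n log k) / 4`. -/

open Nat Finset

theorem pow_self_le_factorial_sq (k : ℕ) : k ^ k ≤ (k !) ^ 2 := by
  have hsq : (k !) ^ 2 = ∏ i ∈ range k, (i + 1) * (k - i) := by
    rw [prod_mul_distrib, prod_range_add_one_eq_factorial, sq, ← prod_range_reflect,
      ← prod_range_add_one_eq_factorial]
    refine congrArg _ (prod_congr rfl fun i hi => ?_)
    have := mem_range.1 hi
    omega
  rw [hsq, pow_eq_prod_const]
  refine prod_le_prod' fun i hi => ?_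
  have := mem_range.1 hi
  -- `(i + 1) * (k - i) = k + i * (k - i - 1)`
  nlinarith [Nat.sub_add_cancel this.le]

theorem factorial_mul_succ_pow_le_ascFactorial (m k : ℕ) :
    k ! * (m + 1) ^ k ≤ (m * k + 1).ascFactorial k := by
  rw [ascFactorial_eq_prod_range, ← prod_range_add_one_eq_factorial, pow_eq_prod_const (m + 1),
    ← prod_mul_distrib]
  refine prod_le_prod' fun i hi => ?_
  have := mem_range.1 hi
  nlinarith

theorem factorial_pow_mul_factorial_pow_le_factorial_mul (m k : ℕ) :
    (k !) ^ m * (m !) ^ k ≤ (m * k)! := by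
  induction m with
  | zero => simp
  | succ m ih =>
    calc (k !) ^ (m + 1) * ((m + 1)!) ^ k = (k !) ^ m * (m !) ^ k * (k ! * (m + 1) ^ k) := by
          rw [factorial_succ, mul_pow]; ring
      _ ≤ (m * k)! * (k ! * (m + 1) ^ k) := Nat.mul_le_mul_right _ ih
      _ ≤ ((m + 1) * k)! := by
          rw [add_one_mul, ← factorial_mul_ascFactorial]
          exact Nat.mul_le_mul_left _ (factorial_mul_succ_pow_le_ascFactorial m k)

theorem mul_log_le_two_mul_log_factorial (k : ℕ) :
    k * Real.log k ≤ 2 * Real.log (k ! : ℝ) := by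
  rcases k.eq_zero_or_pos with rfl | hk
  · simp
  calc k * Real.log k = Real.log ((k : ℝ) ^ k) := (Real.log_pow k k).symm
    _ ≤ Real.log ((k ! : ℝ) ^ 2) :=
      Real.log_le_log (by positivity) (mod_cast pow_self_le_factorial_sq k)
    _ = 2 * Real.log (k ! : ℝ) := by rw [Real.log_pow, Nat.cast_ofNat]

theorem mul_log_factorial_le_log_factorial_div (j k : ℕ) :
    j * Real.log (k ! : ℝ) ≤
      Real.log ((((j + 1) * k)! : ℝ) / ((k ! : ℝ) * (j ! : ℝ) ^ k)) := by
  have hle : (k ! : ℝ) * (k ! : ℝ) ^ j * (j ! : ℝ) ^ k ≤ ((j + 1) * k)! := by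
    calc (k ! : ℝ) * (k ! : ℝ) ^ j * (j ! : ℝ) ^ k ≤ (k ! : ℝ) ^ (j + 1) * ((j + 1)! : ℝ) ^ k := by
          rw [_root_.pow_succ']
          gcongr
          exact j.le_succ
      _ ≤ ((j + 1) * k)! := mod_cast factorial_pow_mul_factorial_pow_le_factorial_mul (j + 1) k
  rw [← Real.log_pow]
  refine Real.log_le_log (by positivity) ?_
  rw [le_div_iff₀ (by positivity)]
  linarith

/-- Corrected analysis of the comparison-based lower bound for the range median
problem: the number `l := n! / (k! · ((n/k − 1)!)^k)` of distinguishable input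
orderings satisfies `log l = Ω(n log k)` (natural logarithm). -/
theorem range_median_lower_bound_count :
    ∃ c : ℝ, 0 < c ∧ ∃ N : ℕ, ∀ n k : ℕ, N ≤ n → 2 ≤ k → 2 * k ≤ n → k ∣ n →
      c * n * Real.log k ≤
        Real.log ((n ! : ℝ) / ((k ! : ℝ) * ((n / k - 1)! : ℝ) ^ k)) := by
  refine ⟨1 / 4, by norm_num, 0, fun n k _ hk h2k hdvd => ?_⟩
  obtain ⟨m, rfl⟩ := hdvd
  have hm : 2 ≤ m := Nat.le_of_mul_le_mul_left (by linarith : k * 2 ≤ k * m) (by omega)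
  obtain ⟨j, rfl⟩ : ∃ j, m = j + 1 := ⟨m - 1, by omega⟩
  rw [Nat.mul_div_cancel_left _ (by omega), add_tsub_cancel_right, mul_comm k]
  have hlog : 0 ≤ Real.log k := Real.log_nonneg (mod_cast (by omega : 1 ≤ k))
  have hj : (1 : ℝ) ≤ j := mod_cast (by omega : 1 ≤ j)
  calc 1 / 4 * (((j + 1) * k : ℕ) : ℝ) * Real.log k ≤ j * (k * Real.log k / 2) := by
        push_cast
        nlinarith [mul_nonneg (by positivity : (0 : ℝ) ≤ k) hlog]
    _ ≤ j * Real.log (k ! : ℝ) := by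
        gcongr
        linarith [mul_log_le_two_mul_log_factorial k]
    _ ≤ _ := mul_log_factorial_le_log_factorial_div j k
end
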